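/- In the setup above, let A ⊂ V be a φ-stable subspace with s = dim A and s₀ = dim(A ∩ U), let B := π₁(A) where π₁ : V → V/φ(K) is the quotient map, let F² := π₁(K + φ(K)) ⊂ V/φ(K), and let C := π₂(A) where π₂ : V → V/(K + φ(K)). Then dim B = s if s₀ < σ₀ and dim B = s - s₀ + σ₀ if s₀ ≥ σ₀; dim(B ∩ F²) = 0 if s₀ < σ₀ and = 1 if s₀ ≥ σ₀; and dim C = s if s₀ < σ₀ and dim C = s - s₀ + σ₀ - 1 if s₀ ≥ σ₀. -/
import Mathlib


open Module Submodule Function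

/-- On a perfect field the Frobenius is surjective, so images of submodules under
Frobenius-semilinear maps are again submodules. -/
instance frobSurj (k : Type*) [Field k] (p : ℕ) [Fact p.Prime] [CharP k p] [PerfectRing k p] :
    RingHomSurjective (frobenius k p) := ⟨surjective_frobenius k p⟩


variable {k : Type*} [Field k] {p : ℕ} [Fact p.Prime] [CharP k p] [PerfectRing k p]
  {V : Type*} [AddCommGroup V] [Module k V]

/-- `φ^i(K)`, the `i`-th iterated image of `K` under the `p`-semilinear map `φ`. -/
def iterMap (φ : V →ₛₗ[frobenius k p] V) (K : Submodule k V) (i : ℕ) : Submodule k V :=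
  (Submodule.map φ)^[i] K

/-- `φ^{-i}(K)`, the `i`-th iterated preimage of `K` under `φ`. -/
def iterComap (φ : V →ₛₗ[frobenius k p] V) (K : Submodule k V) (i : ℕ) : Submodule k V :=
  (Submodule.comap φ)^[i] K

/-- The smallest `φ`-stable subspace containing `K`: `U = Σ_{i ≥ 0} φ^i(K)`. -/
def bigU (φ : V →ₛₗ[frobenius k p] V) (K : Submodule k V) : Submodule k V :=
  ⨆ i : ℕ, iterMap φ K i

/-- The flag `U_m`: `U_m = φ^{-(σ₀-m)}(K) ∩ ⋯ ∩ φ^{-1}(K) ∩ K` for `m ≤ σ₀`, and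
`U_m = K + φ(K) + ⋯ + φ^{m-σ₀}(K)` for `m ≥ σ₀` (so `U_{σ₀} = K`,
`U_{σ₀+1} = K + φ(K)`). -/
def flagU (σ₀ : ℕ) (φ : V →ₛₗ[frobenius k p] V) (K : Submodule k V) (m : ℕ) : Submodule k V :=
  if m ≤ σ₀ then ⨅ i ∈ Finset.range (σ₀ - m + 1), iterComap φ K i
  else ⨆ i ∈ Finset.range (m - σ₀ + 1), iterMap φ K i


section AuxA

variable {φ : V →ₛₗ[frobenius k p] V}

noncomputable def mapPhiEquiv (hφ : Function.Bijective φ) (S : Submodule k V) :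
    S ≃+ Submodule.map φ S :=
  { Equiv.Set.image φ S hφ.injective with
    map_add' := fun a b => Subtype.ext (map_add φ (a:V) (b:V)) }

lemma finrank_map_phi (hφ : Function.Bijective φ) [FiniteDimensional k V] (S : Submodule k V) :
    finrank k (Submodule.map φ S) = finrank k S := by
  have h : Module.rank k S = Module.rank k (Submodule.map φ S) :=
    rank_eq_of_equiv_equiv (⟨frobenius k p, map_zero _⟩ : ZeroHom k k)
      (mapPhiEquiv hφ S) (bijective_frobenius k p)
      (fun r m => Subtype.ext (map_smulₛₗ φ r (m : V)))
  unfold Module.finrank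
  rw [h]

lemma flagU_self (σ₀ : ℕ) (K : Submodule k V) : flagU σ₀ φ K σ₀ = K := by
  simp [flagU, Nat.sub_self, Finset.range_one, iterComap]

lemma flagU_succ_self (σ₀ : ℕ) (K : Submodule k V) :
    flagU σ₀ φ K (σ₀ + 1) = K ⊔ Submodule.map φ K := by
  have h1 : ¬ (σ₀ + 1 ≤ σ₀) := by omega
  have h2 : σ₀ + 1 - σ₀ + 1 = 2 := by omega
  have h3 : Finset.range 2 = {0, 1} := by decide
  simp [flagU, h1, h2, h3, iterMap, iSup_or, iSup_sup_eq]

lemma flagU_le_bigU (σ₀ : ℕ) (K : Submodule k V) (m : ℕ) :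
    flagU σ₀ φ K m ≤ bigU φ K := by
  unfold flagU
  split
  · have h0 : (0:ℕ) ∈ Finset.range (σ₀ - m + 1) := Finset.mem_range.mpr (Nat.succ_pos _)
    exact le_trans (biInf_le (fun i => iterComap φ K i) h0) (le_iSup (iterMap φ K) 0)
  · exact iSup₂_le fun i _ => le_iSup (iterMap φ K) i

end AuxA

section AuxB

variable [FiniteDimensional k V] {φ : V →ₛₗ[frobenius k p] V} {σ₀ : ℕ} {K : Submodule k V}

lemma descent (hφ : Function.Bijective φ)
    (hflag0 : finrank k (flagU σ₀ φ K 0) = 0)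
    (hrec2 : ∀ m : ℕ, 0 < m → m < 2 * σ₀ →
      Submodule.map φ (flagU σ₀ φ K (m - 1)) =
        flagU σ₀ φ K m ⊓ Submodule.map φ (flagU σ₀ φ K m)) :
    ∀ m, m < 2 * σ₀ → ∀ S : Submodule k V, Submodule.map φ S = S →
      S ≤ flagU σ₀ φ K m → S = ⊥ := by
  intro m
  induction m with
  | zero =>
    intro _ S _ hle
    have hbot : flagU σ₀ φ K 0 = ⊥ := Submodule.finrank_eq_zero.mp hflag0
    exact le_bot_iff.mp (hbot ▸ hle)
  | succ n ih =>
    intro hlt S hS hle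
    have h2 := hrec2 (n + 1) (Nat.succ_pos n) hlt
    rw [Nat.add_sub_cancel] at h2
    have hSle : S ≤ Submodule.map φ (flagU σ₀ φ K n) := by
      rw [h2]
      exact le_inf hle (by rw [← hS]; exact Submodule.map_mono hle)
    have hSn : S ≤ flagU σ₀ φ K n :=
      (Submodule.map_le_map_iff_of_injective hφ.injective S (flagU σ₀ φ K n)).mp
        (by rw [hS]; exact hSle)
    exact ih (by omega) S hS hSn

lemma growth (hφ : Function.Bijective φ)
    (hflag0 : finrank k (flagU σ₀ φ K 0) = 0)
    (hrec1 : ∀ m : ℕ, 0 < m → m < 2 * σ₀ →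
      flagU σ₀ φ K (m + 1) = flagU σ₀ φ K m ⊔ Submodule.map φ (flagU σ₀ φ K m))
    (hrec2 : ∀ m : ℕ, 0 < m → m < 2 * σ₀ →
      Submodule.map φ (flagU σ₀ φ K (m - 1)) =
        flagU σ₀ φ K m ⊓ Submodule.map φ (flagU σ₀ φ K m))
    (m : ℕ) (hm0 : 0 < m) (hm : m < 2 * σ₀)
    (W : Submodule k V) (hW : Submodule.map φ W = W)
    (hne : W ⊓ flagU σ₀ φ K m ≠ ⊥) :
    finrank k ↥(W ⊓ flagU σ₀ φ K m) + 1 ≤ finrank k ↥(W ⊓ flagU σ₀ φ K (m + 1)) := by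
  set T := W ⊓ flagU σ₀ φ K m with hT
  have hmapW : Submodule.map φ T ≤ W := by
    rw [← hW]; exact Submodule.map_mono inf_le_left
  have hnotle : ¬ Submodule.map φ T ≤ T := by
    intro hc
    have heq : Submodule.map φ T = T :=
      Submodule.eq_of_le_of_finrank_le hc (finrank_map_phi hφ T).ge
    exact hne (descent hφ hflag0 hrec2 m hm T heq inf_le_right)
  have hlt : T < T ⊔ Submodule.map φ T :=
    lt_of_le_of_ne le_sup_left (fun h => hnotle (le_sup_right.trans h.symm.le))
  have hsup_le : T ⊔ Submodule.map φ T ≤ W ⊓ flagU σ₀ φ K (m + 1) := by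
    have hflagle : flagU σ₀ φ K m ≤ flagU σ₀ φ K (m + 1) := by
      rw [hrec1 m hm0 hm]; exact le_sup_left
    refine sup_le (le_inf inf_le_left (le_trans inf_le_right hflagle)) (le_inf hmapW ?_)
    rw [hrec1 m hm0 hm]
    exact le_trans (Submodule.map_mono inf_le_right) le_sup_right
  calc finrank k ↥T + 1 ≤ finrank k ↥(T ⊔ Submodule.map φ T) :=
        Submodule.finrank_lt_finrank_of_lt hlt
    _ ≤ _ := Submodule.finrank_mono hsup_le

lemma count_aux (hφ : Function.Bijective φ)
    (hflag0 : finrank k (flagU σ₀ φ K 0) = 0)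
    (hrec1 : ∀ m : ℕ, 0 < m → m < 2 * σ₀ →
      flagU σ₀ φ K (m + 1) = flagU σ₀ φ K m ⊔ Submodule.map φ (flagU σ₀ φ K m))
    (hrec2 : ∀ m : ℕ, 0 < m → m < 2 * σ₀ →
      Submodule.map φ (flagU σ₀ φ K (m - 1)) =
        flagU σ₀ φ K m ⊓ Submodule.map φ (flagU σ₀ φ K m))
    (W : Submodule k V) (hW : Submodule.map φ W = W) :
    ∀ j m, 0 < m → m + j ≤ 2 * σ₀ → W ⊓ flagU σ₀ φ K m ≠ ⊥ →
      finrank k ↥(W ⊓ flagU σ₀ φ K m) + j ≤ finrank k ↥(W ⊓ flagU σ₀ φ K (m + j)) := by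
  intro j
  induction j with
  | zero => intro m _ _ _; simp
  | succ n ih =>
    intro m hm0 hmj hne
    have h1 := growth hφ hflag0 hrec1 hrec2 m hm0 (by omega) W hW hne
    have hne2 : W ⊓ flagU σ₀ φ K (m + 1) ≠ ⊥ := by
      intro hb
      rw [hb, finrank_bot] at h1
      omega
    have h2 := ih (m + 1) (by omega) (by omega) hne2
    have hmn : m + 1 + n = m + (n + 1) := by omega
    rw [hmn] at h2
    omega

end AuxB

section AuxC

variable [FiniteDimensional k V] {φ : V →ₛₗ[frobenius k p] V} {σ₀ : ℕ} {K : Submodule k V}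

lemma inf_flag_value (hφ : Function.Bijective φ)
    (hU : finrank k ↥(bigU φ K) = 2 * σ₀)
    (hflag : ∀ m : ℕ, m ≤ 2 * σ₀ → finrank k ↥(flagU σ₀ φ K m) = m)
    (hrec1 : ∀ m : ℕ, 0 < m → m < 2 * σ₀ →
      flagU σ₀ φ K (m + 1) = flagU σ₀ φ K m ⊔ Submodule.map φ (flagU σ₀ φ K m))
    (hrec2 : ∀ m : ℕ, 0 < m → m < 2 * σ₀ →
      Submodule.map φ (flagU σ₀ φ K (m - 1)) =
        flagU σ₀ φ K m ⊓ Submodule.map φ (flagU σ₀ φ K m))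
    (hσ₀ : 1 ≤ σ₀)
    (W : Submodule k V) (hW : Submodule.map φ W = W) (hWU : W ≤ bigU φ K)
    (m : ℕ) (hm : m ≤ 2 * σ₀) :
    finrank k ↥(W ⊓ flagU σ₀ φ K m) + 2 * σ₀ = finrank k ↥W + m ∨
      (finrank k ↥(W ⊓ flagU σ₀ φ K m) = 0 ∧ finrank k ↥W + m ≤ 2 * σ₀) := by
  have hflag0 : finrank k (flagU σ₀ φ K 0) = 0 := hflag 0 (by omega)
  have hsupinf := Submodule.finrank_sup_add_finrank_inf_eq W (flagU σ₀ φ K m)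
  rw [hflag m hm] at hsupinf
  have hsuple : finrank k ↥(W ⊔ flagU σ₀ φ K m) ≤ 2 * σ₀ := by
    rw [← hU]
    exact Submodule.finrank_mono (sup_le hWU (flagU_le_bigU σ₀ K m))
  by_cases hne : W ⊓ flagU σ₀ φ K m = ⊥
  · right
    rw [hne, finrank_bot] at hsupinf ⊢
    omega
  · left
    have hm0 : 0 < m := by
      rcases Nat.eq_zero_or_pos m with h0 | h
      · exfalso
        apply hne
        rw [h0, Submodule.finrank_eq_zero.mp hflag0, inf_bot_eq]
      · exact h
    have hcount := count_aux hφ hflag0 hrec1 hrec2 W hW (2 * σ₀ - m) m hm0 (by omega) hne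
    have hmj : m + (2 * σ₀ - m) = 2 * σ₀ := by omega
    rw [hmj] at hcount
    have hflagtop : flagU σ₀ φ K (2 * σ₀) = bigU φ K :=
      Submodule.eq_of_le_of_finrank_le (flagU_le_bigU σ₀ K _)
        (by rw [hU, hflag (2 * σ₀) le_rfl])
    rw [hflagtop, inf_eq_left.mpr hWU] at hcount
    omega

lemma finrank_map_mkQ_add (P X : Submodule k V) :
    finrank k ↥(Submodule.map P.mkQ X) + finrank k ↥(X ⊓ P) = finrank k ↥X := by
  have h := LinearMap.finrank_range_add_finrank_ker (P.mkQ.comp X.subtype)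
  rw [LinearMap.range_comp, Submodule.range_subtype, LinearMap.ker_comp,
    Submodule.ker_mkQ] at h
  rw [← Submodule.map_comap_subtype, Submodule.finrank_map_subtype_eq]
  exact h

omit [FiniteDimensional k V] in
lemma map_mkQ_inf_eq (P X Y : Submodule k V) :
    Submodule.map P.mkQ X ⊓ Submodule.map P.mkQ Y
      = Submodule.map P.mkQ ((X ⊔ P) ⊓ (Y ⊔ P)) := by
  have hc : Submodule.comap P.mkQ (Submodule.map P.mkQ X ⊓ Submodule.map P.mkQ Y)
      = (X ⊔ P) ⊓ (Y ⊔ P) := by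
    rw [Submodule.comap_inf, Submodule.comap_map_mkQ, Submodule.comap_map_mkQ,
      sup_comm P X, sup_comm P Y]
  rw [← hc, Submodule.map_comap_eq_of_surjective (P.mkQ_surjective)]

end AuxC


/-- dimensions of `B = π₁(A)`, `B ∩ F²` and `C = π₂(A)`, where
`π₁ : V → V/φ(K)`, `F² = π₁(K + φ(K))` and `π₂ : V → V/(K + φ(K))`. -/
theorem dimensions_of_B_and_C [FiniteDimensional k V]
    (φ : V →ₛₗ[frobenius k p] V) (hφ : Function.Bijective φ)
    (σ₀ : ℕ) (hσ₀ : 1 ≤ σ₀) (K : Submodule k V)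
    (hK : finrank k K = σ₀)
    (hKφ : finrank k ↥(K ⊔ Submodule.map φ K) = σ₀ + 1)
    (hU : finrank k ↥(bigU φ K) = 2 * σ₀)
    (hflag : ∀ m : ℕ, m ≤ 2 * σ₀ → finrank k ↥(flagU σ₀ φ K m) = m)
    (hrec1 : ∀ m : ℕ, 0 < m → m < 2 * σ₀ →
      flagU σ₀ φ K (m + 1) = flagU σ₀ φ K m ⊔ Submodule.map φ (flagU σ₀ φ K m))
    (hrec2 : ∀ m : ℕ, 0 < m → m < 2 * σ₀ →
      Submodule.map φ (flagU σ₀ φ K (m - 1)) =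
        flagU σ₀ φ K m ⊓ Submodule.map φ (flagU σ₀ φ K m))
    (A : Submodule k V) (hA : Submodule.map φ A = A)
    (s s₀ : ℕ) (hs : finrank k A = s) (hs₀ : finrank k ↥(A ⊓ bigU φ K) = s₀) :
    (s₀ < σ₀ →
      finrank k ↥(Submodule.map (Submodule.map φ K).mkQ A) = s ∧
      finrank k ↥(Submodule.map (Submodule.map φ K).mkQ A ⊓
        Submodule.map (Submodule.map φ K).mkQ (K ⊔ Submodule.map φ K)) = 0 ∧
      finrank k ↥(Submodule.map (K ⊔ Submodule.map φ K).mkQ A) = s) ∧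
    (σ₀ ≤ s₀ →
      finrank k ↥(Submodule.map (Submodule.map φ K).mkQ A) = s - s₀ + σ₀ ∧
      finrank k ↥(Submodule.map (Submodule.map φ K).mkQ A ⊓
        Submodule.map (Submodule.map φ K).mkQ (K ⊔ Submodule.map φ K)) = 1 ∧
      finrank k ↥(Submodule.map (K ⊔ Submodule.map φ K).mkQ A) = s - s₀ + σ₀ - 1) := by
  have hinj := hφ.injective
  set P1 := Submodule.map φ K with hP1def
  set P2 := K ⊔ Submodule.map φ K with hP2def
  -- basic inclusions
  have hKU : K ≤ bigU φ K := le_iSup (iterMap φ K) 0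
  have hφKU : P1 ≤ bigU φ K := le_iSup (iterMap φ K) 1
  have hP2U : P2 ≤ bigU φ K := sup_le hKU hφKU
  have hP12 : P1 ≤ P2 := le_sup_right
  -- φ-stability of bigU
  have hUst : Submodule.map φ (bigU φ K) = bigU φ K := by
    have hle : Submodule.map φ (bigU φ K) ≤ bigU φ K := by
      rw [bigU, Submodule.map_iSup]
      refine iSup_le fun i => ?_
      have hstep : Submodule.map φ (iterMap φ K i) = iterMap φ K (i + 1) :=
        (Function.iterate_succ_apply' (Submodule.map φ) i K).symm
      rw [hstep]
      exact le_iSup (iterMap φ K) (i + 1)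
    exact Submodule.eq_of_le_of_finrank_le hle (finrank_map_phi hφ _).ge
  set W := A ⊓ bigU φ K with hWdef
  have hWst : Submodule.map φ W = W := by
    rw [hWdef, Submodule.map_inf φ hinj, hA, hUst]
  have hWU : W ≤ bigU φ K := inf_le_right
  have hs₀s : s₀ ≤ s := by
    rw [← hs, ← hs₀]
    exact Submodule.finrank_mono inf_le_left
  -- identify intersections with W
  have hAP1 : A ⊓ P1 = W ⊓ P1 := by
    rw [hWdef, inf_assoc, inf_eq_right.mpr hφKU]
  have hAP2 : A ⊓ P2 = W ⊓ P2 := by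
    rw [hWdef, inf_assoc, inf_eq_right.mpr hP2U]
  have hWP1 : Submodule.map φ (W ⊓ K) = W ⊓ P1 := by
    rw [Submodule.map_inf φ hinj, hWst]
  -- finranks of intersections via the flag
  have hfl_s : flagU σ₀ φ K σ₀ = K := flagU_self σ₀ K
  have hfl_s1 : flagU σ₀ φ K (σ₀ + 1) = P2 := flagU_succ_self σ₀ K
  have hval1 := inf_flag_value hφ hU hflag hrec1 hrec2 hσ₀ W hWst hWU σ₀ (by omega)
  have hval2 := inf_flag_value hφ hU hflag hrec1 hrec2 hσ₀ W hWst hWU (σ₀ + 1) (by omega)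
  rw [hfl_s] at hval1
  rw [hfl_s1] at hval2

  have ha : finrank k ↥(A ⊓ P1) = finrank k ↥(W ⊓ K) := by
    rw [hAP1, ← hWP1, finrank_map_phi hφ]
  -- quotient dimension identities
  have hQ1 := finrank_map_mkQ_add P1 A
  have hQ2 := finrank_map_mkQ_add P2 A
  rw [hs] at hQ1 hQ2
  -- the intersection B ⊓ F²
  have hinfq : Submodule.map P1.mkQ A ⊓ Submodule.map P1.mkQ P2
      = Submodule.map P1.mkQ ((A ⊔ P1) ⊓ P2) := by
    rw [map_mkQ_inf_eq, sup_eq_left.mpr hP12]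
  have hmod : (A ⊔ P1) ⊓ P2 = P1 ⊔ A ⊓ P2 := by
    rw [sup_comm A P1, sup_inf_assoc_of_le _ hP12]
  have hX := finrank_map_mkQ_add P1 ((A ⊔ P1) ⊓ P2)
  have hXP1 : (A ⊔ P1) ⊓ P2 ⊓ P1 = P1 :=
    inf_eq_right.mpr (le_inf le_sup_right hP12)
  rw [hXP1] at hX
  have hfP1 : finrank k ↥P1 = σ₀ := by
    rw [hP1def, finrank_map_phi hφ, hK]
  have hXval : finrank k ↥((A ⊔ P1) ⊓ P2) + finrank k ↥(P1 ⊓ (A ⊓ P2))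
      = finrank k ↥P1 + finrank k ↥(A ⊓ P2) := by
    rw [hmod]
    exact Submodule.finrank_sup_add_finrank_inf_eq P1 (A ⊓ P2)
  have hP1AP2 : P1 ⊓ (A ⊓ P2) = A ⊓ P1 := by
    rw [inf_comm P1 (A ⊓ P2), inf_assoc, inf_eq_right.mpr hP12]
  rw [hP1AP2, hfP1] at hXval
  rw [hinfq]
  rw [ha] at hQ1 hXval
  rw [hAP2] at hQ2 hXval
  rw [hfP1] at hX
  constructor <;> intro hcase <;>
    exact ⟨by omega, by omega, by omega⟩
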